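/- Fix β > 0, δ > 0 and let F(x) = x · ((x−β)/(x+β) e^{2xδ} − 1)/(1 + (x−β)/(x+β) e^{2xδ}). Then F is strictly increasing on (x₀, +∞) for x₀ large enough, F(x) < x for all such x, and F(x) → +∞ as x → +∞; consequently, for any m < 0 < M with min(|m|,M) large, the equation |m| + M = F(√(M²+k²)) + F(√(m²+k²)) has a unique solution k ∈ (0, +∞). -/
import Mathlib

open Real Set Filter


/-- The function `F(x) = x ((x−β)/(x+β) e^{2xδ} − 1)/(1 + (x−β)/(x+β) e^{2xδ})`. -/
noncomputable def Ffun (β δ x : ℝ) : ℝ :=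
  x * (((x - β) / (x + β)) * Real.exp (2 * x * δ) - 1) /
    (1 + ((x - β) / (x + β)) * Real.exp (2 * x * δ))

noncomputable def Gfun (β δ x : ℝ) : ℝ := ((x - β) / (x + β)) * Real.exp (2 * x * δ)

lemma Ffun_eq (β δ x : ℝ) :
    Ffun β δ x = x * ((Gfun β δ x - 1) / (1 + Gfun β δ x)) := by
  simp [Ffun, Gfun, mul_div_assoc]

lemma G_gt_one (β δ x : ℝ) (hβ : 0 < β) (hx1 : β + 1 ≤ x)
    (hx2 : Real.log (2 * β + 2) ≤ 2 * x * δ) : 1 < Gfun β δ x := by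
  have hxb : 0 < x + β := by linarith
  have he : 2 * β + 2 ≤ Real.exp (2 * x * δ) := by
    calc 2 * β + 2 = Real.exp (Real.log (2 * β + 2)) := by
          rw [Real.exp_log]; linarith
      _ ≤ Real.exp (2 * x * δ) := Real.exp_le_exp.2 hx2
  have key : x + β < (x - β) * Real.exp (2 * x * δ) := by
    have h1 : x + β ≤ (2 * β + 1) * (x - β) := by nlinarith
    have h2 : (2 * β + 1) * (x - β) < (2 * β + 2) * (x - β) := by nlinarith
    have h3 : (2 * β + 2) * (x - β) ≤ (x - β) * Real.exp (2 * x * δ) := by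
      rw [mul_comm]
      exact mul_le_mul_of_nonneg_left he (by linarith)
    linarith
  rw [Gfun, div_mul_eq_mul_div, lt_div_iff₀ hxb, one_mul]
  linarith [key]

lemma G_mono (β δ : ℝ) (hβ : 0 < β) (hδ : 0 < δ) {a b : ℝ} (ha : β < a) (hab : a < b) :
    Gfun β δ a < Gfun β δ b := by
  have hab' : 0 < a + β := by linarith
  have hbb' : 0 < b + β := by linarith
  have h1 : (a - β) / (a + β) < (b - β) / (b + β) := by
    rw [div_lt_div_iff₀ hab' hbb']; nlinarith
  have h2 : Real.exp (2 * a * δ) < Real.exp (2 * b * δ) :=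
    Real.exp_lt_exp.2 (by nlinarith)
  exact mul_lt_mul'' h1 h2 (div_nonneg (by linarith) hab'.le) (Real.exp_pos _).le

lemma r_lt_r {u v : ℝ} (hu : 1 < u) (huv : u < v) :
    (u - 1) / (1 + u) < (v - 1) / (1 + v) := by
  rw [div_lt_div_iff₀ (by linarith) (by linarith)]; nlinarith

lemma F_lt_self (β δ x : ℝ) (hG : 1 < Gfun β δ x) (hx : 0 < x) :
    Ffun β δ x < x := by
  rw [Ffun_eq]
  have : (Gfun β δ x - 1) / (1 + Gfun β δ x) < 1 := by
    rw [div_lt_one (by linarith)]; linarith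
  nlinarith [this]

lemma F_strict (β δ : ℝ) {a b : ℝ} (ha : 0 < a) (hab : a < b)
    (hGa : 1 < Gfun β δ a) (hG : Gfun β δ a < Gfun β δ b) :
    Ffun β δ a < Ffun β δ b := by
  rw [Ffun_eq, Ffun_eq]
  have h1 := r_lt_r hGa hG
  have h2 : 0 < (Gfun β δ a - 1) / (1 + Gfun β δ a) :=
    div_pos (by linarith) (by linarith)
  have := mul_lt_mul'' hab h1 ha.le h2.le
  linarith

lemma F_lower (β δ x c : ℝ) (hx : 0 ≤ x)
    (hr : c ≤ (Gfun β δ x - 1) / (1 + Gfun β δ x)) :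
    c * x ≤ Ffun β δ x := by
  rw [Ffun_eq]
  calc c * x = x * c := mul_comm _ _
    _ ≤ x * ((Gfun β δ x - 1) / (1 + Gfun β δ x)) := mul_le_mul_of_nonneg_left hr hx

lemma F_nonneg (β δ x : ℝ) (hG : 1 ≤ Gfun β δ x) (hx : 0 ≤ x) :
    0 ≤ Ffun β δ x := by
  rw [Ffun_eq]
  exact mul_nonneg hx (div_nonneg (by linarith) (by linarith))

lemma G_contOn (β δ : ℝ) (s : Set ℝ) (h : ∀ x ∈ s, 0 < x + β) :
    ContinuousOn (Gfun β δ) s := by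
  apply ContinuousOn.mul
  · exact ContinuousOn.div (by fun_prop) (by fun_prop) (fun x hx => (h x hx).ne')
  · fun_prop

lemma F_contOn (β δ : ℝ) (s : Set ℝ) (h : ∀ x ∈ s, 0 < x + β)
    (h2 : ∀ x ∈ s, 0 < 1 + Gfun β δ x) : ContinuousOn (Ffun β δ) s := by
  have hG := G_contOn β δ s h
  have heq : Ffun β δ = fun x => x * (Gfun β δ x - 1) / (1 + Gfun β δ x) := by
    funext x; simp [Ffun, Gfun]
  rw [heq]
  exact ContinuousOn.div (continuousOn_id.mul (hG.sub continuousOn_const))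
    (continuousOn_const.add hG) (fun x hx => (h2 x hx).ne')

lemma sqrt_ge_self (a k : ℝ) (ha : 0 ≤ a) : a ≤ Real.sqrt (a ^ 2 + k ^ 2) := by
  calc a = Real.sqrt (a ^ 2) := (Real.sqrt_sq ha).symm
    _ ≤ Real.sqrt (a ^ 2 + k ^ 2) := Real.sqrt_le_sqrt (by nlinarith [sq_nonneg k])

/-- For fixed `β, δ > 0`, `F` is strictly increasing on a half-line `(x₀, ∞)` with
`x₀ > β` large enough, satisfies `F(x) < x` there, and tends to `+∞` at `+∞`;
consequently for `m < 0 < M` with `min(|m|, M)` large, the equation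
`|m| + M = F(√(M²+k²)) + F(√(m²+k²))` has a unique solution `k ∈ (0, ∞)`. -/
theorem stmt_19 (β δ : ℝ) (hβ : 0 < β) (hδ : 0 < δ) :
    ∃ x₀ : ℝ, β < x₀ ∧
      StrictMonoOn (Ffun β δ) (Set.Ioi x₀) ∧
      (∀ x > x₀, Ffun β δ x < x) ∧
      Filter.Tendsto (Ffun β δ) Filter.atTop Filter.atTop ∧
      ∃ ζ₀ : ℝ, ∀ m M : ℝ, m < 0 → 0 < M → ζ₀ ≤ min (-m) M →
        ∃! k : ℝ, 0 < k ∧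
          -m + M = Ffun β δ (Real.sqrt (M ^ 2 + k ^ 2)) +
            Ffun β δ (Real.sqrt (m ^ 2 + k ^ 2)) := by
  set x₀ : ℝ := max (β + 1) (Real.log (2 * β + 2) / (2 * δ)) with hx₀def
  have hx₀β : β < x₀ := lt_of_lt_of_le (by linarith) (le_max_left _ _)
  have hcond : ∀ x, x₀ ≤ x → β + 1 ≤ x ∧ Real.log (2 * β + 2) ≤ 2 * x * δ := by
    intro x hx
    constructor
    · exact (le_max_left _ _).trans hx
    · have h1 : Real.log (2 * β + 2) / (2 * δ) ≤ x := (le_max_right _ _).trans hx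
      rw [div_le_iff₀ (by linarith)] at h1
      linarith [h1]
  have hG1 : ∀ x, x₀ ≤ x → 1 < Gfun β δ x := fun x hx =>
    G_gt_one β δ x hβ (hcond x hx).1 (hcond x hx).2
  have hxpos : ∀ x, x₀ ≤ x → 0 < x := fun x hx => by
    have := (hcond x hx).1; linarith
  have hmono : StrictMonoOn (Ffun β δ) (Set.Ioi x₀) := by
    intro a ha b hb hab
    exact F_strict β δ (hxpos a (le_of_lt ha)) hab (hG1 a (le_of_lt ha))
      (G_mono β δ hβ hδ (hx₀β.trans ha) hab)
  have hlt : ∀ x > x₀, Ffun β δ x < x := fun x hx =>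
    F_lt_self β δ x (hG1 x hx.le) (hxpos x hx.le)
  have htend : Filter.Tendsto (Ffun β δ) Filter.atTop Filter.atTop := by
    set x₁ := x₀ + 1 with hx₁
    set c := (Gfun β δ x₁ - 1) / (1 + Gfun β δ x₁) with hc
    have hG₁ : 1 < Gfun β δ x₁ := hG1 x₁ (by linarith)
    have hcpos : 0 < c := div_pos (by linarith) (by linarith)
    apply tendsto_atTop_mono' _ _ (tendsto_id.const_mul_atTop hcpos)
    filter_upwards [eventually_ge_atTop x₁] with x hx
    apply F_lower β δ x c (le_of_lt (hxpos x (by linarith)))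
    rcases eq_or_lt_of_le hx with h | h
    · rw [← h]
    · exact le_of_lt (r_lt_r hG₁ (G_mono β δ hβ hδ (by linarith) h))
  refine ⟨x₀, hx₀β, hmono, hlt, htend, x₀ + 1, ?_⟩
  intro m M hm hM hmin
  have hMx : x₀ + 1 ≤ M := hmin.trans (min_le_right _ _)
  have hmx : x₀ + 1 ≤ -m := hmin.trans (min_le_left _ _)
  set H : ℝ → ℝ := fun k => Ffun β δ (Real.sqrt (M ^ 2 + k ^ 2)) +
      Ffun β δ (Real.sqrt (m ^ 2 + k ^ 2)) with hH
  have hm2 : m ^ 2 = (-m) ^ 2 := (neg_pow_two m).symm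
  -- sqrt values exceed x₀
  have hsM : ∀ k : ℝ, x₀ < Real.sqrt (M ^ 2 + k ^ 2) := by
    intro k
    have h := sqrt_ge_self M k hM.le
    linarith
  have hsm : ∀ k : ℝ, x₀ < Real.sqrt (m ^ 2 + k ^ 2) := by
    intro k
    rw [hm2]
    have h := sqrt_ge_self (-m) k (by linarith)
    linarith
  -- strict monotonicity of H on Ici 0
  have hHmono : StrictMonoOn H (Set.Ici 0) := by
    intro k1 hk1 k2 _ h12
    have hk1' : (0:ℝ) ≤ k1 := hk1
    have hsq : k1 ^ 2 < k2 ^ 2 := by nlinarith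
    have s1 : Real.sqrt (M ^ 2 + k1 ^ 2) < Real.sqrt (M ^ 2 + k2 ^ 2) :=
      Real.sqrt_lt_sqrt (by positivity) (by linarith)
    have s2 : Real.sqrt (m ^ 2 + k1 ^ 2) < Real.sqrt (m ^ 2 + k2 ^ 2) :=
      Real.sqrt_lt_sqrt (by positivity) (by linarith)
    have f1 := F_strict β δ (hxpos _ (hsM k1).le) s1 (hG1 _ (hsM k1).le)
      (G_mono β δ hβ hδ (hx₀β.trans (hsM k1)) s1)
    have f2 := F_strict β δ (hxpos _ (hsm k1).le) s2 (hG1 _ (hsm k1).le)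
      (G_mono β δ hβ hδ (hx₀β.trans (hsm k1)) s2)
    exact add_lt_add f1 f2
  -- continuity of H
  have hFcont : ContinuousOn (Ffun β δ) (Set.Ioi x₀) := by
    apply F_contOn
    · intro x hx; have := hxpos x (le_of_lt hx); linarith
    · intro x hx; have := hG1 x (le_of_lt hx); linarith
  have hHcont : ContinuousOn H (Set.univ) := by
    apply ContinuousOn.add
    · exact hFcont.comp (Continuous.continuousOn (by fun_prop)) (fun k _ => hsM k)
    · exact hFcont.comp (Continuous.continuousOn (by fun_prop)) (fun k _ => hsm k)
  -- H 0 < -m + M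
  have hH0 : H 0 < -m + M := by
    have e1 : Real.sqrt (M ^ 2 + 0 ^ 2) = M := by
      rw [show M ^ 2 + 0 ^ 2 = M ^ 2 by ring, Real.sqrt_sq hM.le]
    have e2 : Real.sqrt (m ^ 2 + 0 ^ 2) = -m := by
      rw [show m ^ 2 + 0 ^ 2 = (-m) ^ 2 by ring, Real.sqrt_sq (by linarith)]
    have f1 : Ffun β δ M < M := hlt M (by linarith)
    have f2 : Ffun β δ (-m) < -m := hlt (-m) (by linarith)
    simp only [hH, e1, e2]
    linarith
  -- choose K large
  obtain ⟨B, hB⟩ := eventually_atTop.1 (tendsto_atTop.1 htend (-m + M))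
  set K := max B 1 with hK
  have hK0 : (0:ℝ) ≤ K := le_trans zero_le_one (le_max_right _ _)
  have hHK : -m + M ≤ H K := by
    have hKB : B ≤ K := le_max_left _ _
    have h1 : B ≤ Real.sqrt (M ^ 2 + K ^ 2) := by
      calc B ≤ K := hKB
        _ = Real.sqrt (K ^ 2) := (Real.sqrt_sq hK0).symm
        _ ≤ Real.sqrt (M ^ 2 + K ^ 2) := Real.sqrt_le_sqrt (by nlinarith)
    have f1 := hB _ h1
    have f2 : 0 ≤ Ffun β δ (Real.sqrt (m ^ 2 + K ^ 2)) :=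
      F_nonneg β δ _ (le_of_lt (hG1 _ (hsm K).le)) (Real.sqrt_nonneg _)
    simp only [hH]
    linarith
  -- IVT
  have hmem : -m + M ∈ Set.Icc (H 0) (H K) := ⟨hH0.le, hHK⟩
  obtain ⟨k, hkIcc, hkeq⟩ := intermediate_value_Icc hK0 (hHcont.mono (Set.subset_univ _)) hmem
  have hkpos : 0 < k := by
    rcases eq_or_lt_of_le hkIcc.1 with h | h
    · exfalso; rw [← h] at hkeq; linarith
    · exact h
  refine ⟨k, ⟨hkpos, hkeq.symm⟩, ?_⟩
  rintro k' ⟨hk'pos, hk'eq⟩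
  exact hHmono.injOn (Set.mem_Ici.2 hk'pos.le) (Set.mem_Ici.2 hkpos.le)
    (hk'eq.symm.trans hkeq.symm)
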